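/- Let ν > 0, μ ∈ ℝ, let p(u) := [1 + (u/√ν + μ)²]^{−(ν+1)/2} · exp(μ(ν − 1)·arctan(u/√ν + μ)), and let F be the cumulative distribution function of the probability measure with density proportional to p. Then F is heavy-tailed at the right end: for every s > 0, lim sup_{z→∞} (1 − F(z))/e^{−sz} = ∞. -/

import Mathlib

/-! The arctan factor of the Pearson IV density is bounded above and below by positive constants,
so the density is comparable to `(1 + (u / √ν + μ) ^ 2) ^ (-(ν + 1) / 2)`: it is integrable and
at least `C u ^ (-(ν + 1))` for large `u`. Hence the right tail beyond `z` is at least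
`C (z + 1) ^ (-(ν + 1))`, which beats every `e^{-s z}`, so `(1 - F z) e^{s z} → ∞`. -/

open MeasureTheory Filter

/-- Un-normalized density of the Pearson type IV (skew t) distribution with
parameters `ν > 0` and `μ ∈ ℝ`. -/
noncomputable def pearsonIV (ν μ : ℝ) (u : ℝ) : ℝ :=
  (1 + (u / Real.sqrt ν + μ) ^ 2) ^ (-(ν + 1) / 2 : ℝ) *
    Real.exp (μ * (ν - 1) * Real.arctan (u / Real.sqrt ν + μ))

/-- Cumulative distribution function of the probability measure whose density is
proportional to the un-normalized Pearson type IV density. -/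
noncomputable def pearsonIVcdf (ν μ : ℝ) (z : ℝ) : ℝ :=
  (∫ u in Set.Iic z, pearsonIV ν μ u) / ∫ u, pearsonIV ν μ u

open Real Set

lemma abs_mul_arctan_le (a x : ℝ) : |a * arctan x| ≤ |a| * (π / 2) := by
  rw [abs_mul]
  gcongr
  exact abs_le.2 ⟨(neg_pi_div_two_lt_arctan x).le, (arctan_lt_pi_div_two x).le⟩

lemma integral_Ioi_div_integral_eq_one_sub {f : ℝ → ℝ} (hf : Integrable f)
    (h0 : ∫ u, f u ≠ 0) (z : ℝ) :
    (∫ u in Ioi z, f u) / ∫ u, f u = 1 - (∫ u in Iic z, f u) / ∫ u, f u := by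
  have hsplit := intervalIntegral.integral_Iic_add_Ioi (b := z) hf.integrableOn hf.integrableOn
  field_simp
  linarith

lemma tendsto_exp_mul_integral_Ioi_atTop {f : ℝ → ℝ} (hf : Integrable f) (hf0 : 0 ≤ f)
    {C r s : ℝ} (hC : 0 < C) (hr : 0 ≤ r) (hs : 0 < s)
    (hlow : ∀ᶠ u in atTop, C * u ^ (-r) ≤ f u) :
    Tendsto (fun z ↦ exp (s * z) * ∫ u in Ioi z, f u) atTop atTop := by
  obtain ⟨u₀, hu₀⟩ := eventually_atTop.1 hlow
  have hbound : ∀ z ≥ max u₀ 0,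
      C * exp (-s) * (exp (s * (z + 1)) / (z + 1) ^ r) ≤ exp (s * z) * ∫ u in Ioi z, f u := by
    intro z hz
    have hu₀z : u₀ ≤ z := le_of_max_le_left hz
    have hz0 : 0 ≤ z := le_of_max_le_right hz
    have hslab : C * (z + 1) ^ (-r) ≤ ∫ u in Ioc z (z + 1), f u := by
      have hpoint : ∀ u ∈ Ioc z (z + 1), C * (z + 1) ^ (-r) ≤ f u := fun u hu ↦
        calc C * (z + 1) ^ (-r) ≤ C * u ^ (-r) :=
              mul_le_mul_of_nonneg_left
                (rpow_le_rpow_of_nonpos (by linarith [hu.1]) hu.2 (neg_nonpos.2 hr)) hC.le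
          _ ≤ f u := hu₀ u (by linarith [hu.1])
      simpa [volume_Ioc] using
        setIntegral_ge_of_const_le_real measurableSet_Ioc (by simp) hpoint hf.integrableOn
    have htail : (∫ u in Ioc z (z + 1), f u) ≤ ∫ u in Ioi z, f u :=
      setIntegral_mono_set hf.integrableOn (Eventually.of_forall hf0)
        Ioc_subset_Ioi_self.eventuallyLE
    have hexp : exp (s * z) = exp (-s) * exp (s * (z + 1)) := by rw [← exp_add]; ring_nf
    calc C * exp (-s) * (exp (s * (z + 1)) / (z + 1) ^ r)
        = exp (s * z) * (C * (z + 1) ^ (-r)) := by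
          rw [rpow_neg (by linarith), hexp]
          ring
      _ ≤ exp (s * z) * ∫ u in Ioi z, f u := by gcongr; exact hslab.trans htail
  have hlim : Tendsto (fun z ↦ C * exp (-s) * (exp (s * (z + 1)) / (z + 1) ^ r)) atTop atTop :=
    ((tendsto_exp_mul_div_rpow_atTop r s hs).comp
      (tendsto_atTop_add_const_right atTop 1 tendsto_id)).const_mul_atTop (by positivity)
  exact tendsto_atTop_mono' atTop (eventually_atTop.2 ⟨_, hbound⟩) hlim

lemma one_add_sq_div_add_le_mul_sq {c : ℝ} (hc : 0 < c) (a : ℝ) {u : ℝ} (hu1 : 1 ≤ u)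
    (hua : c * |a| ≤ u) : 1 + (u / c + a) ^ 2 ≤ (1 + 4 / c ^ 2) * u ^ 2 := by
  have ha : |a| ≤ u / c := by rw [le_div_iff₀ hc]; linarith
  have habs : |u / c + a| ≤ 2 * (u / c) :=
    calc |u / c + a| ≤ |u / c| + |a| := abs_add_le _ _
      _ ≤ 2 * (u / c) := by rw [abs_of_nonneg (by positivity)]; linarith
  have hsq : (u / c + a) ^ 2 ≤ 4 / c ^ 2 * u ^ 2 :=
    calc (u / c + a) ^ 2 ≤ (2 * (u / c)) ^ 2 :=
          sq_le_sq' (neg_le_of_abs_le habs) (le_of_abs_le habs)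
      _ = 4 / c ^ 2 * u ^ 2 := by ring
  nlinarith

section

variable (ν μ : ℝ)

lemma pearsonIV_pos (u : ℝ) : 0 < pearsonIV ν μ u := by
  unfold pearsonIV
  positivity

lemma pearsonIV_continuous : Continuous (pearsonIV ν μ) := by
  unfold pearsonIV
  have hx : Continuous fun u : ℝ ↦ u / √ν + μ := by fun_prop
  have hbase_pos (u : ℝ) : (0 : ℝ) < 1 + (u / √ν + μ) ^ 2 := by positivity
  exact ((continuous_const.add (hx.pow 2)).rpow_const fun u ↦ Or.inl (hbase_pos u).ne').mul
    (continuous_exp.comp (continuous_const.mul (continuous_arctan.comp hx)))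

lemma pearsonIV_le_mul_exp (u : ℝ) :
    pearsonIV ν μ u ≤
      (1 + (u / √ν + μ) ^ 2) ^ (-(ν + 1) / 2 : ℝ) * exp (|μ * (ν - 1)| * (π / 2)) := by
  rw [pearsonIV]
  gcongr ?_ * exp ?_
  exact (le_abs_self _).trans (abs_mul_arctan_le _ _)

lemma mul_exp_neg_le_pearsonIV (u : ℝ) :
    (1 + (u / √ν + μ) ^ 2) ^ (-(ν + 1) / 2 : ℝ) * exp (-(|μ * (ν - 1)| * (π / 2))) ≤
      pearsonIV ν μ u := by
  rw [pearsonIV]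
  gcongr ?_ * exp ?_
  exact neg_le_of_abs_le (abs_mul_arctan_le _ _)

variable {ν}

lemma pearsonIV_integrable (hν : 0 < ν) : Integrable (pearsonIV ν μ) := by
  have hbase : Integrable fun y : ℝ ↦ (1 + y ^ 2) ^ (-(ν + 1) / 2 : ℝ) := by
    simpa using integrable_rpow_neg_one_add_norm_sq (E := ℝ) (μ := volume) (r := ν + 1)
      (by simpa using hν)
  have hshift : Integrable fun u : ℝ ↦ (1 + (u / √ν + μ) ^ 2) ^ (-(ν + 1) / 2 : ℝ) :=
    (integrable_comp_div_iff (fun y : ℝ ↦ (1 + (y + μ) ^ 2) ^ (-(ν + 1) / 2 : ℝ))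
      (sqrt_pos.2 hν).ne').2 (hbase.comp_add_right μ)
  refine (hshift.mul_const (exp (|μ * (ν - 1)| * (π / 2)))).mono'
    (pearsonIV_continuous ν μ).aestronglyMeasurable (Eventually.of_forall fun u ↦ ?_)
  rw [norm_of_nonneg (pearsonIV_pos ν μ u).le]
  exact pearsonIV_le_mul_exp ν μ u

lemma pearsonIV_eventually_ge (hν : 0 < ν) :
    ∃ C > 0, ∀ᶠ u in atTop, C * u ^ (-(ν + 1)) ≤ pearsonIV ν μ u := by
  set K := |μ * (ν - 1)| * (π / 2)
  refine ⟨(1 + 4 / ν) ^ (-(ν + 1) / 2 : ℝ) * exp (-K), by positivity, ?_⟩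
  filter_upwards [eventually_ge_atTop 1, eventually_ge_atTop (√ν * |μ|)] with u hu1 huμ
  have hu0 : 0 ≤ u := zero_le_one.trans hu1
  have hbase : (1 + 4 / ν) * u ^ 2 = (1 + 4 / √ν ^ 2) * u ^ 2 := by rw [sq_sqrt hν.le]
  have hpow : ((1 + 4 / ν) * u ^ 2) ^ (-(ν + 1) / 2 : ℝ) =
      (1 + 4 / ν) ^ (-(ν + 1) / 2 : ℝ) * u ^ (-(ν + 1)) := by
    rw [mul_rpow (by positivity) (by positivity), ← rpow_natCast, ← rpow_mul hu0]
    congr 2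
    push_cast
    ring
  calc (1 + 4 / ν) ^ (-(ν + 1) / 2 : ℝ) * exp (-K) * u ^ (-(ν + 1))
      = ((1 + 4 / ν) * u ^ 2) ^ (-(ν + 1) / 2 : ℝ) * exp (-K) := by
        rw [hpow]; ring
    _ ≤ (1 + (u / √ν + μ) ^ 2) ^ (-(ν + 1) / 2 : ℝ) * exp (-K) := by
        gcongr ?_ * _
        refine rpow_le_rpow_of_nonpos (by positivity) ?_ (by linarith)
        exact hbase ▸ one_add_sq_div_add_le_mul_sq (sqrt_pos.2 hν) μ hu1 huμ
    _ ≤ pearsonIV ν μ u := mul_exp_neg_le_pearsonIV ν μ u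

end

theorem pearsonIV_heavy_tailed (ν μ : ℝ) (hν : 0 < ν) :
    ∀ s : ℝ, 0 < s →
      limsup (fun z : ℝ => (((1 - pearsonIVcdf ν μ z) / Real.exp (-s * z) : ℝ) : EReal))
        atTop = ⊤ := by
  intro s hs
  obtain ⟨C, hC, hlow⟩ := pearsonIV_eventually_ge μ hν
  have hint := pearsonIV_integrable μ hν
  have hI : 0 < ∫ u, pearsonIV ν μ u :=
    integral_pos_of_integrable_nonneg_nonzero (x := 0) (pearsonIV_continuous ν μ) hint
      (fun u ↦ (pearsonIV_pos ν μ u).le) (pearsonIV_pos ν μ 0).ne'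
  have htail := tendsto_exp_mul_integral_Ioi_atTop hint (fun u ↦ (pearsonIV_pos ν μ u).le) hC
    (by linarith) hs hlow
  have hratio : Tendsto (fun z ↦ (1 - pearsonIVcdf ν μ z) / exp (-s * z)) atTop atTop := by
    refine (htail.const_mul_atTop (inv_pos.2 hI)).congr fun z ↦ ?_
    rw [pearsonIVcdf, ← integral_Ioi_div_integral_eq_one_sub hint hI.ne', neg_mul, exp_neg,
      div_inv_eq_mul]
    ring
  exact (EReal.tendsto_coe_nhds_top_iff.2 hratio).limsup_eq
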